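/- Let X̄ have the piecewise density f_X̄(x) = (p_k/(h_k A))·(μ(λ)/(1 − e^{−μ(λ)}))·e^{−μ(λ)(x − s_{k−1}A)/(h_k A)} for x ∈ (s_{k−1}A, s_k A], k = 1,…,n, where λ ∈ (0, 1/2), ∑_{k=1}^n p_k (k−1) = α − λ, and μ(λ) is the unique positive solution of 1/μ − e^{−μ}/(1 − e^{−μ}) = λ. Then the average-power expression is met with equality: ∑_{k=1}^n ( (E[X̄·1{U = k}] − A·s_{k−1}·P(U = k))/h_k + (k−1)·A·P(U = k) ) = αA, where U = k iff X̄ lies in the k-th interval (with U = 1 iff X̄ ∈ [0, s_1 A] and U = k iff X̄ ∈ (s_{k−1}A, s_k A] for k ≥ 2). -/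

import Mathlib

open MeasureTheory ProbabilityTheory Real Filter
open scoped NNReal ENNReal Classical

noncomputable section

/-- Kullback–Leibler divergence (Mathlib's `ProbabilityTheory.klDiv`). -/
def klDiv {α : Type*} [MeasurableSpace α] (μ ν : Measure α) : EReal :=
  if μ ≪ ν ∧ Integrable (llr μ ν) μ then ((∫ x, llr μ ν x ∂μ : ℝ) : EReal) else ⊤

/-- Mutual information of a joint law: KL divergence of the joint law from the
product of its marginals. -/
def mutualInfo {α β : Type*} [MeasurableSpace α] [MeasurableSpace β]
    (joint : Measure (α × β)) : EReal :=
  klDiv joint ((joint.map Prod.fst).prod (joint.map Prod.snd))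

/-- Partial sums `s_k = h_1 + ⋯ + h_k`. -/
def sCum {n : ℕ} (h : Fin n → ℝ) (k : ℕ) : ℝ :=
  ∑ i : Fin n, if i.val < k then h i else 0

/-- Joint law of `(X, Y)` with `Y = hᵀX + Z`, `Z ~ N(0, v)` independent of `X`. -/
def misoJoint {n : ℕ} (h : Fin n → ℝ) (v : ℝ≥0) (μ : Measure (Fin n → ℝ)) :
    Measure ((Fin n → ℝ) × ℝ) :=
  (μ.prod (gaussianReal 0 v)).map (fun p => (p.1, (∑ k, h k * p.1 k) + p.2))

/-- MISO capacity under peak-power constraint `A` and average-power constraint `E`. -/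
def misoCapacity {n : ℕ} (h : Fin n → ℝ) (v : ℝ≥0) (A E : ℝ) : EReal :=
  ⨆ μ ∈ {μ : Measure (Fin n → ℝ) | IsProbabilityMeasure μ ∧
      (∀ k, ∀ᵐ x ∂μ, x k ∈ Set.Icc 0 A) ∧ (∑ k, ∫ x, x k ∂μ) ≤ E},
    mutualInfo (misoJoint h v μ)

/-- MISO capacity under only an average-power constraint `E`. -/
def misoCapacityAvg {n : ℕ} (h : Fin n → ℝ) (v : ℝ≥0) (E : ℝ) : EReal :=
  ⨆ μ ∈ {μ : Measure (Fin n → ℝ) | IsProbabilityMeasure μ ∧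
      (∀ k, ∀ᵐ x ∂μ, 0 ≤ x k) ∧ (∑ k, ∫ x, x k ∂μ) ≤ E},
    mutualInfo (misoJoint h v μ)

/-- Joint law of `(X̄, X̄ + Z)` for the unit-gain SISO channel. -/
def sisoJoint (v : ℝ≥0) (μ : Measure ℝ) : Measure (ℝ × ℝ) :=
  (μ.prod (gaussianReal 0 v)).map (fun p => (p.1, p.1 + p.2))

/-- Unit-gain SISO capacity under peak-power constraint `A` and average-power
constraint `E`. -/
def sisoCapacity (v : ℝ≥0) (A E : ℝ) : EReal :=
  ⨆ μ ∈ {μ : Measure ℝ | IsProbabilityMeasure μ ∧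
      (∀ᵐ x ∂μ, x ∈ Set.Icc 0 A) ∧ (∫ x, x ∂μ) ≤ E},
    mutualInfo (sisoJoint v μ)

/-- Unit-gain SISO capacity under only an average-power constraint `E`. -/
def sisoCapacityAvg (v : ℝ≥0) (E : ℝ) : EReal :=
  ⨆ μ ∈ {μ : Measure ℝ | IsProbabilityMeasure μ ∧
      (∀ᵐ x ∂μ, 0 ≤ x) ∧ (∫ x, x ∂μ) ≤ E},
    mutualInfo (sisoJoint v μ)

/-- The interval `(s_{k-1} A, s_k A]` (with the first one being `[0, s_1 A]`)
corresponding to the event `U = k` (0-indexed: `k ∈ Fin n` stands for `k+1`). -/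
def uInterval {n : ℕ} (h : Fin n → ℝ) (A : ℝ) (k : Fin n) : Set ℝ :=
  if k.val = 0 then Set.Icc 0 (sCum h 1 * A)
  else Set.Ioc (sCum h k.val * A) (sCum h (k.val + 1) * A)

/-- The average input power `∑_k p_k ((E[X̄ | U=k] - A s_{k-1})/h_k + (k-1) A)`
consumed to generate a scalar law of `X̄`. -/
def avgPowerUse {n : ℕ} (h : Fin n → ℝ) (A : ℝ) (μ : Measure ℝ) : ℝ :=
  ∑ k : Fin n,
    (((∫ x in uInterval h A k, x ∂μ) - A * sCum h k.val * (μ (uInterval h A k)).toReal) / h k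
      + (k.val : ℝ) * A * (μ (uInterval h A k)).toReal)

/-- The threshold `α_th`. -/
def alphaTh {n : ℕ} (h : Fin n → ℝ) : ℝ :=
  1 / 2 + (1 / sCum h n) * ∑ k : Fin n, h k * (k.val : ℝ)


/-- The piecewise truncated-exponential density on `[0, s_n A]`: on the `k`-th
interval `(s_{k-1}A, s_k A]` it equals
`(p_k/(h_k A)) (m/(1-e^{-m})) e^{-m (x - s_{k-1}A)/(h_k A)}`. -/
def truncExpPiecewise {n : ℕ} (h : Fin n → ℝ) (A m : ℝ) (p : Fin n → ℝ) (x : ℝ) : ℝ :=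
  ∑ k : Fin n, (uInterval h A k).indicator
    (fun y => p k / (h k * A) * (m / (1 - Real.exp (-m))) *
      Real.exp (-(m * (y - sCum h k.val * A) / (h k * A)))) x

end

/-!
On the `k`-th interval the density is `p_k` times the exponential density of rate
`m / (h_k A)` truncated to `(s_{k-1} A, s_k A]`, so the interval carries mass `p_k` and its
conditional mean is `s_{k-1} A + h_k A λ` with `λ = 1/m - e^{-m}/(1 - e^{-m})`, which is exactly
the equation defining `m`. Hence the `k`-th summand of the average power is
`p_k (λ + k - 1) A`, and `∑ p_k = 1`, `∑ p_k (k - 1) = α - λ` give `α A`.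
-/

section TruncatedExponential

variable {a w m : ℝ}

lemma hasDerivAt_exp_affine (x : ℝ) :
    HasDerivAt (fun z => exp (-(m * (z - a) / w))) (-(m / w) * exp (-(m * (x - a) / w))) x := by
  have hlin : HasDerivAt (fun z => -(m * (z - a) / w)) (-(m / w)) x := by
    simpa using ((((hasDerivAt_id x).sub_const a).const_mul m).div_const w).fun_neg
  simpa [mul_comm] using hlin.exp

lemma one_sub_exp_neg_ne_zero (hm : m ≠ 0) : 1 - exp (-m) ≠ 0 := by
  rw [sub_ne_zero, ne_comm, Ne, exp_eq_one_iff, neg_eq_zero]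
  exact hm

lemma integral_exp_affine (hm : m ≠ 0) (hw : w ≠ 0) :
    ∫ x in a..a + w, exp (-(m * (x - a) / w)) = w / m * (1 - exp (-m)) := by
  have hderiv : ∀ x ∈ Set.uIcc a (a + w),
      HasDerivAt (fun z => -(w / m) * exp (-(m * (z - a) / w))) (exp (-(m * (x - a) / w))) x := by
    intro x _
    refine ((hasDerivAt_exp_affine x).const_mul (-(w / m))).congr_deriv ?_
    field_simp
  rw [intervalIntegral.integral_eq_sub_of_hasDerivAt hderiv
    ((by fun_prop : Continuous _).intervalIntegrable _ _)]
  have hend : m * (a + w - a) / w = m := by field_simp; ring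
  simp only [hend, sub_self, mul_zero, zero_div, neg_zero, exp_zero]
  ring

/-- Mean times mass of the exponential law with rate `m / w` truncated to `[a, a + w]`. -/
lemma integral_mul_exp_affine (hm : m ≠ 0) (hw : w ≠ 0) :
    ∫ x in a..a + w, x * exp (-(m * (x - a) / w))
      = (a + w * (1 / m - exp (-m) / (1 - exp (-m)))) * (w / m * (1 - exp (-m))) := by
  have hderiv : ∀ x ∈ Set.uIcc a (a + w),
      HasDerivAt (fun z => -(z * w / m + (w / m) ^ 2) * exp (-(m * (z - a) / w)))
        (x * exp (-(m * (x - a) / w))) x := by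
    intro x _
    have hpoly : HasDerivAt (fun z => -(z * w / m + (w / m) ^ 2)) (-(w / m)) x := by
      simpa using ((((hasDerivAt_id x).mul_const w).div_const m).add_const ((w / m) ^ 2)).fun_neg
    refine (hpoly.mul (hasDerivAt_exp_affine x)).congr_deriv ?_
    field_simp
    ring
  rw [intervalIntegral.integral_eq_sub_of_hasDerivAt hderiv
    ((by fun_prop : Continuous _).intervalIntegrable _ _)]
  have hend : m * (a + w - a) / w = m := by field_simp; ring
  have hE := one_sub_exp_neg_ne_zero hm
  simp only [hend, sub_self, mul_zero, zero_div, neg_zero, exp_zero]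
  field_simp
  ring

end TruncatedExponential

lemma setIntegral_withDensity_ofReal {X : Type*} [MeasurableSpace X] {μ : Measure X}
    {f : X → ℝ} {s : Set X} (hs : MeasurableSet s) (hf : Measurable f)
    (hf_nonneg : ∀ x ∈ s, 0 ≤ f x) (g : X → ℝ) :
    ∫ x in s, g x ∂μ.withDensity (fun x => ENNReal.ofReal (f x))
      = ∫ x in s, f x * g x ∂μ := by
  rw [setIntegral_withDensity_eq_setIntegral_toReal_smul₀ hf.ennreal_ofReal.aemeasurable
    (ae_of_all _ fun _ => ENNReal.ofReal_lt_top) g hs]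
  refine setIntegral_congr_fun hs fun x hx => ?_
  rw [ENNReal.toReal_ofReal (hf_nonneg x hx), smul_eq_mul]

section PartialSums

variable {n : ℕ} {h : Fin n → ℝ}

lemma sCum_zero (h : Fin n → ℝ) : sCum h 0 = 0 := by simp [sCum]

lemma sCum_succ (h : Fin n → ℝ) (k : Fin n) : sCum h (k.val + 1) = sCum h k.val + h k := by
  rw [sCum, sCum, ← Fintype.sum_ite_eq' k h, ← Finset.sum_add_distrib]
  refine Finset.sum_congr rfl fun i _ => ?_
  rcases lt_trichotomy i.val k.val with hlt | heq | hgt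
  · simp [hlt, Nat.lt_succ_of_lt hlt, Fin.ne_of_lt hlt]
  · simp [Fin.ext heq]
  · simp [hgt.not_gt, Nat.not_lt.mpr hgt, (Fin.ne_of_lt hgt).symm]

lemma monotone_sCum (hh : ∀ k, 0 ≤ h k) : Monotone (sCum h) := by
  intro j k hjk
  refine Finset.sum_le_sum fun i _ => ?_
  split_ifs with hj hk hk
  · exact le_rfl
  · exact absurd (hj.trans_le hjk) hk
  · exact hh i
  · exact le_rfl

end PartialSums

section Intervals

variable {n : ℕ} {h : Fin n → ℝ} {A : ℝ}

lemma measurableSet_uInterval (h : Fin n → ℝ) (A : ℝ) (k : Fin n) :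
    MeasurableSet (uInterval h A k) := by
  unfold uInterval
  split_ifs
  exacts [measurableSet_Icc, measurableSet_Ioc]

lemma uInterval_subset_Iic (k : Fin n) :
    uInterval h A k ⊆ Set.Iic (sCum h (k.val + 1) * A) := by
  unfold uInterval
  split_ifs with hk
  · rw [hk]; exact Set.Icc_subset_Iic_self
  · exact Set.Ioc_subset_Iic_self

lemma uInterval_subset_Ioi {k : Fin n} (hk : k.val ≠ 0) :
    uInterval h A k ⊆ Set.Ioi (sCum h k.val * A) := by
  rw [uInterval, if_neg hk]
  exact Set.Ioc_subset_Ioi_self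

lemma pairwise_disjoint_uInterval (hh : ∀ k, 0 ≤ h k) (hA : 0 ≤ A) :
    Pairwise (Function.onFun Disjoint (uInterval h A)) := by
  suffices ∀ j k : Fin n, j < k → Disjoint (uInterval h A j) (uInterval h A k) from
    fun j k hjk => (lt_or_gt_of_ne hjk).elim (this j k) fun hkj => (this k j hkj).symm
  intro j k hjk
  have hsep : sCum h (j.val + 1) * A ≤ sCum h k.val * A :=
    mul_le_mul_of_nonneg_right (monotone_sCum hh (Nat.succ_le_of_lt hjk)) hA
  refine Set.disjoint_left.mpr fun x hxj hxk => ?_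
  have hxj' : x ≤ sCum h (j.val + 1) * A := uInterval_subset_Iic j hxj
  have hxk' : sCum h k.val * A < x := uInterval_subset_Ioi (by omega) hxk
  linarith

lemma restrict_uInterval (h : Fin n → ℝ) (A : ℝ) (k : Fin n) :
    volume.restrict (uInterval h A k)
      = volume.restrict (Set.Ioc (sCum h k.val * A) (sCum h (k.val + 1) * A)) := by
  unfold uInterval
  split_ifs with hk
  · rw [hk, sCum_zero, zero_mul, restrict_Ioc_eq_restrict_Icc]
  · rfl

lemma setIntegral_uInterval (hk : 0 ≤ h k * A) (F : ℝ → ℝ) :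
    ∫ x in uInterval h A k, F x = ∫ x in sCum h k.val * A..sCum h k.val * A + h k * A, F x := by
  rw [restrict_uInterval, sCum_succ, add_mul, intervalIntegral.integral_of_le (by linarith)]

end Intervals

section Density

variable {n : ℕ} {h : Fin n → ℝ} {A m : ℝ} {p : Fin n → ℝ}

lemma measurable_truncExpPiecewise (h : Fin n → ℝ) (A m : ℝ) (p : Fin n → ℝ) :
    Measurable (truncExpPiecewise h A m p) :=
  Finset.measurable_sum _ fun k _ =>
    Measurable.indicator (by fun_prop) (measurableSet_uInterval h A k)

lemma truncExpPiecewise_of_mem (hh : ∀ k, 0 ≤ h k) (hA : 0 ≤ A) {k : Fin n} {x : ℝ}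
    (hx : x ∈ uInterval h A k) :
    truncExpPiecewise h A m p x
      = p k / (h k * A) * (m / (1 - exp (-m)))
          * exp (-(m * (x - sCum h k.val * A) / (h k * A))) := by
  rw [truncExpPiecewise, Finset.sum_eq_single_of_mem k (Finset.mem_univ k),
    Set.indicator_of_mem hx]
  intro j _ hjk
  exact Set.indicator_of_notMem
    (Set.disjoint_right.mp (pairwise_disjoint_uInterval hh hA hjk) hx) _

lemma setIntegral_uInterval_withDensity (hh : ∀ k, 0 ≤ h k) (hA : 0 ≤ A) (hm : 0 < m)
    (hp : ∀ k, 0 ≤ p k) (k : Fin n) (g : ℝ → ℝ) :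
    ∫ x in uInterval h A k, g x
        ∂volume.withDensity (fun x => ENNReal.ofReal (truncExpPiecewise h A m p x))
      = p k / (h k * A) * (m / (1 - exp (-m)))
          * ∫ x in sCum h k.val * A..sCum h k.val * A + h k * A,
              g x * exp (-(m * (x - sCum h k.val * A) / (h k * A))) := by
  have hpiece := fun x (hx : x ∈ uInterval h A k) =>
    truncExpPiecewise_of_mem (m := m) (p := p) hh hA hx
  have hE : 0 < 1 - exp (-m) := sub_pos.mpr (exp_lt_one_iff.mpr (neg_neg_of_pos hm))
  have hnonneg : ∀ x ∈ uInterval h A k, 0 ≤ truncExpPiecewise h A m p x := fun x hx => by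
    rw [hpiece x hx]
    have := hh k
    have := hp k
    positivity
  rw [setIntegral_withDensity_ofReal (measurableSet_uInterval h A k)
      (measurable_truncExpPiecewise h A m p) hnonneg,
    setIntegral_congr_fun (measurableSet_uInterval h A k) fun x hx => by rw [hpiece x hx],
    setIntegral_uInterval (mul_nonneg (hh k) hA), ← intervalIntegral.integral_const_mul]
  congr 1 with x
  ring

lemma measure_uInterval_withDensity (hh : ∀ k, 0 < h k) (hA : 0 < A) (hm : 0 < m)
    (hp : ∀ k, 0 ≤ p k) (k : Fin n) :
    (volume.withDensity (fun x => ENNReal.ofReal (truncExpPiecewise h A m p x))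
      (uInterval h A k)).toReal = p k := by
  have hint := setIntegral_uInterval_withDensity (fun k => (hh k).le) hA.le hm hp k fun _ => 1
  simp only [setIntegral_const, smul_eq_mul, mul_one, one_mul] at hint
  have hw : h k * A ≠ 0 := (mul_pos (hh k) hA).ne'
  have hE := one_sub_exp_neg_ne_zero hm.ne'
  rw [← measureReal_def, hint, integral_exp_affine hm.ne' hw]
  field_simp [(hh k).ne']

lemma setIntegral_id_uInterval_withDensity (hh : ∀ k, 0 < h k) (hA : 0 < A) (hm : 0 < m)
    (hp : ∀ k, 0 ≤ p k) (k : Fin n) :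
    ∫ x in uInterval h A k, x
        ∂volume.withDensity (fun x => ENNReal.ofReal (truncExpPiecewise h A m p x))
      = p k * (sCum h k.val * A + h k * A * (1 / m - exp (-m) / (1 - exp (-m)))) := by
  have hw : h k * A ≠ 0 := (mul_pos (hh k) hA).ne'
  have hE := one_sub_exp_neg_ne_zero hm.ne'
  rw [setIntegral_uInterval_withDensity (fun k => (hh k).le) hA.le hm hp k fun x => x,
    integral_mul_exp_affine hm.ne' hw]
  field_simp [(hh k).ne']

end Density

theorem piecewise_density_average_power_general (n : ℕ) (h : Fin n → ℝ)
    (hpos : ∀ k, 0 < h k)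
    (A α l m : ℝ) (hA : 0 < A)
    (hm : 0 < m) (hmeq : 1 / m - Real.exp (-m) / (1 - Real.exp (-m)) = l)
    (p : Fin n → ℝ) (hppos : ∀ k, 0 < p k) (hpsum : (∑ k, p k) = 1)
    (hpavg : (∑ k : Fin n, p k * (k.val : ℝ)) = α - l) :
    avgPowerUse h A
        (MeasureTheory.volume.withDensity fun x =>
          ENNReal.ofReal (truncExpPiecewise h A m p x))
      = α * A := by
  have hp : ∀ k, 0 ≤ p k := fun k => (hppos k).le
  have hterm : ∀ k : Fin n,
      ((p k * (sCum h k.val * A + h k * A * l)) - A * sCum h k.val * p k) / h k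
        + (k.val : ℝ) * A * p k = A * l * p k + A * (p k * k.val) := fun k => by
    field_simp [(hpos k).ne']
    ring
  simp only [avgPowerUse, measure_uInterval_withDensity hpos hA hm hp,
    setIntegral_id_uInterval_withDensity hpos hA hm hp, hmeq, hterm]
  rw [Finset.sum_add_distrib, ← Finset.mul_sum, ← Finset.mul_sum, hpsum, hpavg]
  ring

theorem piecewise_density_average_power (n : ℕ) (hn : 2 ≤ n) (h : Fin n → ℝ)
    (hord : ∀ i j : Fin n, i ≤ j → h j ≤ h i) (hpos : ∀ k, 0 < h k)
    (A α l m : ℝ) (hA : 0 < A) (hα : 0 < α) (hl : l ∈ Set.Ioo (0 : ℝ) (1 / 2))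
    (hm : 0 < m) (hmeq : 1 / m - Real.exp (-m) / (1 - Real.exp (-m)) = l)
    (p : Fin n → ℝ) (hppos : ∀ k, 0 < p k) (hpsum : (∑ k, p k) = 1)
    (hpavg : (∑ k : Fin n, p k * (k.val : ℝ)) = α - l) :
    avgPowerUse h A
        (MeasureTheory.volume.withDensity fun x =>
          ENNReal.ofReal (truncExpPiecewise h A m p x))
      = α * A :=
  piecewise_density_average_power_general n h hpos A α l m hA hm hmeq p hppos hpsum hpavg
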